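/- arXiv:1708.06707 — 3 statements merged into one kernel-verified Lean document; each statement's English description precedes it below -/
import Mathlib

section
/- Let ω be a real-valued random variable whose distribution is symmetric about 0 (i.e., ω and -ω have the same law), and let δ > 0. Then E[exp(δω - (δ²/2)ω²)] ≤ 1. -/
/-!
Pairing `x` with `-x`, the integrand satisfies
`f x + f (-x) = 2 cosh (δ x) exp (-(δ x)² / 2) ≤ 2`, because `cosh y ≤ exp (y² / 2)`
(compare the power series termwise, using `(2k)! ≥ 2ᵏ k!`). Since the law of `ω` is invariant
under negation, averaging `f` and `f ∘ neg` against it gives `E[f(ω)] ≤ 1`.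
Integrability is automatic: `δ x - δ² x² / 2 ≤ 1 / 2`, so `f ≤ exp (1 / 2)`.
-/

open MeasureTheory

namespace Real

theorem mul_sub_half_sq_mul_sq_le_half (δ x : ℝ) : δ * x - δ ^ 2 / 2 * x ^ 2 ≤ 1 / 2 := by
  nlinarith [sq_nonneg (δ * x - 1)]

theorem exp_mul_sub_half_sq_mul_sq_add_neg_le_two (δ x : ℝ) :
    exp (δ * x - δ ^ 2 / 2 * x ^ 2) + exp (δ * -x - δ ^ 2 / 2 * (-x) ^ 2) ≤ 2 := by
  calc _ = 2 * cosh (δ * x) * exp (-((δ * x) ^ 2 / 2)) := by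
        rw [cosh_eq, mul_div_cancel₀ _ two_ne_zero, add_mul, ← exp_add, ← exp_add]
        ring_nf
    _ ≤ 2 * exp ((δ * x) ^ 2 / 2) * exp (-((δ * x) ^ 2 / 2)) := by
      gcongr
      exact cosh_le_exp_half_sq _
    _ = 2 := by rw [mul_assoc, ← exp_add, add_neg_cancel, exp_zero, mul_one]

end Real

namespace MeasureTheory

theorem integrable_exp_mul_sub_half_sq_mul_sq (μ : Measure ℝ) [IsFiniteMeasure μ] (δ : ℝ) :
    Integrable (fun x => Real.exp (δ * x - δ ^ 2 / 2 * x ^ 2)) μ := by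
  refine Integrable.mono' (integrable_const (Real.exp (1 / 2))) (by fun_prop) (ae_of_all _ ?_)
  intro x
  rw [Real.norm_eq_abs, abs_of_pos (Real.exp_pos _)]
  exact Real.exp_le_exp.2 (Real.mul_sub_half_sq_mul_sq_le_half δ x)

theorem Measure.isNegInvariant_map_of_map_eq_map_neg {α G : Type*} [MeasurableSpace α]
    [MeasurableSpace G] [InvolutiveNeg G] [MeasurableNeg G] {P : Measure α} {X : α → G}
    (hX : Measurable X) (h : P.map X = P.map (fun a => -X a)) : (P.map X).IsNegInvariant :=
  ⟨by rw [Measure.neg, Measure.map_map measurable_neg hX]; exact h.symm⟩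

theorem integral_le_of_add_comp_neg_le {G : Type*} [MeasurableSpace G] [AddGroup G]
    [MeasurableNeg G] {μ : Measure G} [IsProbabilityMeasure μ] [μ.IsNegInvariant] {f : G → ℝ}
    {c : ℝ} (hf : Integrable f μ) (hle : ∀ x, f x + f (-x) ≤ 2 * c) : ∫ x, f x ∂μ ≤ c := by
  have htwice : 2 * ∫ x, f x ∂μ = ∫ x, (f x + f (-x)) ∂μ := by
    rw [integral_add hf hf.comp_neg, integral_neg_eq_self]
    ring
  have hbound : ∫ x, (f x + f (-x)) ∂μ ≤ 2 * c := by
    simpa using integral_mono (hf.add hf.comp_neg) (integrable_const (2 * c)) hle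
  linarith

end MeasureTheory

theorem symmetric_charge_single_site_bound_general
    {α : Type*} [MeasurableSpace α] (P : Measure α) [IsProbabilityMeasure P]
    (ω : α → ℝ) (hω : Measurable ω)
    (hsymm : Measure.map ω P = Measure.map (fun a => -ω a) P)
    (δ : ℝ) :
    ∫ a, Real.exp (δ * ω a - δ ^ 2 / 2 * (ω a) ^ 2) ∂P ≤ 1 := by
  have := Measure.isProbabilityMeasure_map (μ := P) hω.aemeasurable
  have := Measure.isNegInvariant_map_of_map_eq_map_neg hω hsymm
  rw [← integral_map (f := fun x => Real.exp (δ * x - δ ^ 2 / 2 * x ^ 2)) hω.aemeasurable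
    (by fun_prop)]
  refine integral_le_of_add_comp_neg_le (integrable_exp_mul_sub_half_sq_mul_sq _ δ) fun x => ?_
  simpa using Real.exp_mul_sub_half_sq_mul_sq_add_neg_le_two δ x

theorem symmetric_charge_single_site_bound
    {α : Type*} [MeasurableSpace α] (P : Measure α) [IsProbabilityMeasure P]
    (ω : α → ℝ) (hω : Measurable ω)
    (hsymm : Measure.map ω P = Measure.map (fun a => -ω a) P)
    (δ : ℝ) (hδ : 0 < δ)
    (hint : Integrable (fun a => Real.exp (δ * ω a - δ ^ 2 / 2 * (ω a) ^ 2)) P) :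
    ∫ a, Real.exp (δ * ω a - δ ^ 2 / 2 * (ω a) ^ 2) ∂P ≤ 1 :=
  symmetric_charge_single_site_bound_general P ω hω hsymm δ
end

section
/- Let Ω be a real random variable with E[Ω²] ≥ mℓ² + vℓ and E[Ω⁴] ≤ cℓ⁴ for constants m, v, c > 0 and ℓ ∈ ℕ. If β > 0 satisfies βℓ² ≤ a with ca ≤ η² for some η ∈ (0,1) with η² ≤ ηm, then E[exp(-βΩ²)] ≤ exp(-(βvℓ + (1-η)βmℓ²)). -/
/-!
Since `e^{-t} ≤ 1 - t + t²` for `t ≥ 0`, taking `t = βΩ²` bounds `E[e^{-βΩ²}]` by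
`1 - β E[Ω²] + β² E[Ω⁴]`. The constraint `βℓ² ≤ a` with `ca ≤ η² ≤ ηm` makes the fourth-moment
term `β²cℓ⁴` at most the fraction `η` of the gain `βmℓ²`, and `1 + x ≤ eˣ` concludes.
-/

open MeasureTheory

lemma Real.exp_neg_le_one_sub_add_sq {t : ℝ} (ht : 0 ≤ t) : Real.exp (-t) ≤ 1 - t + t ^ 2 := by
  have hinv : Real.exp (-t) * Real.exp t = 1 := by rw [← Real.exp_add, neg_add_cancel, Real.exp_zero]
  nlinarith [Real.add_one_le_exp t, Real.exp_pos (-t)]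

lemma integral_exp_neg_le_one_sub_add_sq {α : Type*} [MeasurableSpace α] {μ : Measure α}
    [IsProbabilityMeasure μ] {Y : α → ℝ} (hY : 0 ≤ᵐ[μ] Y) (hY1 : Integrable Y μ)
    (hY2 : Integrable (fun x => Y x ^ 2) μ) :
    ∫ x, Real.exp (-Y x) ∂μ ≤ 1 - ∫ x, Y x ∂μ + ∫ x, Y x ^ 2 ∂μ := by
  have hexp : Integrable (fun x => Real.exp (-Y x)) μ := by
    refine (integrable_const (1 : ℝ)).mono'
      (Real.continuous_exp.comp_aestronglyMeasurable hY1.aestronglyMeasurable.neg) ?_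
    filter_upwards [hY] with x hx
    simpa [abs_of_pos (Real.exp_pos _)] using hx
  have hlin : Integrable (fun x => 1 - Y x) μ := (integrable_const 1).sub hY1
  have hpoly : Integrable (fun x => 1 - Y x + Y x ^ 2) μ := hlin.add hY2
  calc ∫ x, Real.exp (-Y x) ∂μ ≤ ∫ x, (1 - Y x + Y x ^ 2) ∂μ := by
        refine integral_mono_ae hexp hpoly ?_
        filter_upwards [hY] with x hx using Real.exp_neg_le_one_sub_add_sq hx
    _ = 1 - ∫ x, Y x ∂μ + ∫ x, Y x ^ 2 ∂μ := by
        rw [integral_add hlin hY2, integral_sub (integrable_const 1) hY1, integral_const]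
        simp

lemma mul_sq_le_mul_of_le {s a c η m : ℝ} (hs : 0 ≤ s) (hc : 0 ≤ c) (hsa : s ≤ a)
    (hca : c * a ≤ η ^ 2) (hηm : η ^ 2 ≤ η * m) : c * s ^ 2 ≤ η * m * s := by
  calc c * s ^ 2 = s * (c * s) := by ring
    _ ≤ s * (η * m) := mul_le_mul_of_nonneg_left
        ((mul_le_mul_of_nonneg_left hsa hc).trans (hca.trans hηm)) hs
    _ = η * m * s := by ring

theorem single_site_upper_bound_small_occupation_general
    {α : Type*} [MeasurableSpace α] (P : Measure α) [IsProbabilityMeasure P]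
    (Ω : α → ℝ)
    (ℓ : ℕ) (m v c a η β : ℝ)
    (hc : 0 < c) (hβ : 0 < β)
    (hint2 : Integrable (fun x => (Ω x) ^ 2) P)
    (hint4 : Integrable (fun x => (Ω x) ^ 4) P)
    (hmom2 : ∫ x, (Ω x) ^ 2 ∂P ≥ m * (ℓ : ℝ) ^ 2 + v * ℓ)
    (hmom4 : ∫ x, (Ω x) ^ 4 ∂P ≤ c * (ℓ : ℝ) ^ 4)
    (ha : β * (ℓ : ℝ) ^ 2 ≤ a) (hca : c * a ≤ η ^ 2) (hηm : η ^ 2 ≤ η * m) :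
    ∫ x, Real.exp (-β * (Ω x) ^ 2) ∂P
      ≤ Real.exp (-(β * v * ℓ + (1 - η) * β * m * (ℓ : ℝ) ^ 2)) := by
  have hint4' : Integrable (fun x => (β * Ω x ^ 2) ^ 2) P := by
    simpa only [mul_pow, ← pow_mul] using hint4.const_mul (β ^ 2)
  have htaylor := integral_exp_neg_le_one_sub_add_sq (μ := P) (Y := fun x => β * Ω x ^ 2)
    (ae_of_all _ fun x => by positivity) (hint2.const_mul β) hint4'
  simp only [mul_pow, ← pow_mul, integral_const_mul, ← neg_mul] at htaylor
  have hsmall := mul_sq_le_mul_of_le (by positivity) hc.le ha hca hηm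
  have hmom2' := mul_le_mul_of_nonneg_left hmom2 hβ.le
  have hmom4' := mul_le_mul_of_nonneg_left hmom4 (sq_nonneg β)
  calc ∫ x, Real.exp (-β * Ω x ^ 2) ∂P
      ≤ -(β * v * ℓ + (1 - η) * β * m * (ℓ : ℝ) ^ 2) + 1 := by linarith
    _ ≤ Real.exp (-(β * v * ℓ + (1 - η) * β * m * (ℓ : ℝ) ^ 2)) := Real.add_one_le_exp _

theorem single_site_upper_bound_small_occupation
    {α : Type*} [MeasurableSpace α] (P : Measure α) [IsProbabilityMeasure P]
    (Ω : α → ℝ) (hΩ : Measurable Ω)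
    (ℓ : ℕ) (m v c a η β : ℝ)
    (hm : 0 < m) (hv : 0 < v) (hc : 0 < c) (hβ : 0 < β)
    (hη : η ∈ Set.Ioo (0 : ℝ) 1)
    (hint2 : Integrable (fun x => (Ω x) ^ 2) P)
    (hint4 : Integrable (fun x => (Ω x) ^ 4) P)
    (hmom2 : ∫ x, (Ω x) ^ 2 ∂P ≥ m * (ℓ : ℝ) ^ 2 + v * ℓ)
    (hmom4 : ∫ x, (Ω x) ^ 4 ∂P ≤ c * (ℓ : ℝ) ^ 4)
    (ha : β * (ℓ : ℝ) ^ 2 ≤ a) (hca : c * a ≤ η ^ 2) (hηm : η ^ 2 ≤ η * m) :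
    ∫ x, Real.exp (-β * (Ω x) ^ 2) ∂P
      ≤ Real.exp (-(β * v * ℓ + (1 - η) * β * m * (ℓ : ℝ) ^ 2)) :=
  single_site_upper_bound_small_occupation_general P Ω ℓ m v c a η β hc hβ hint2 hint4 hmom2 hmom4
    ha hca hηm
end

section
/- Let g : ℕ → (0, ∞) be such that log g is superadditive, i.e., g(m+n) ≥ g(m)·g(n) for all m, n ∈ ℕ. For a simple random walk S on ℤ^d with local times ℓ_n(x), define Z_n = E[∏_{x∈ℤ^d} g(ℓ_n(x))] (with the convention g(0) = 1). Then Z_{m+n} ≥ Z_m · Z_n for all m, n ∈ ℕ, and hence lim_{n→∞} (1/n) log Z_n exists in (-∞, ∞] and equals sup_n (1/n) log Z_n. -/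
/-!
Splitting the first `m + n` steps at time `m`, the local time of the whole path is the local time
of the first `m` steps plus that of the path after time `m`, so superadditivity of `log g` gives a
pointwise bound of the weight of `m + n` steps from below by a product of two weights. The second
factor only depends on the increments after time `m`, which are independent of the first `m` steps
and distributed as the walk itself; taking expectations gives `Z m * Z n ≤ Z (m + n)`. Fekete's
lemma applied to the superadditive sequence `log Z n` yields the limit.
-/

open MeasureTheory ProbabilityTheory Finset Filter

theorem tendsto_div_iSup_of_superadditive {u : ℕ → ℝ} (hu : ∀ m n, u m + u n ≤ u (m + n)) :
    Tendsto (fun n : ℕ => ((u n / n : ℝ) : EReal)) atTop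
      (nhds (⨆ n : ℕ, ((u (n + 1) / ((n : ℝ) + 1) : ℝ) : EReal))) := by
  have hsub : Subadditive (fun n => -u n) := fun m n => by linarith [hu m n]
  refine tendsto_order.2 ⟨fun c hc => ?_, fun c hc => ?_⟩
  · obtain ⟨k, hk⟩ := lt_iSup_iff.mp hc
    obtain ⟨x, hcx, hxk⟩ := EReal.exists_between_coe_real hk
    have hx : -u (k + 1) / ((k + 1 : ℕ) : ℝ) < -x := by
      rw [neg_div, neg_lt_neg_iff]; exact_mod_cast hxk
    filter_upwards [hsub.eventually_div_lt_of_div_lt k.succ_ne_zero hx] with p hp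
    rw [neg_div, neg_lt_neg_iff] at hp
    exact hcx.trans (EReal.coe_lt_coe_iff.mpr hp)
  · filter_upwards [eventually_ge_atTop 1] with n hn
    obtain ⟨k, rfl⟩ := Nat.exists_eq_add_of_le' hn
    exact lt_of_le_of_lt (le_iSup_of_le k (by push_cast; rfl)) hc

section LocalTime

variable {E : Type*} [DecidableEq E]

def localTime (s : ℕ → E) (n : ℕ) (x : E) : ℕ := #{i ∈ Icc 1 n | s i = x}

lemma localTime_zero (s : ℕ → E) (x : E) : localTime s 0 x = 0 := by simp [localTime]

lemma localTime_succ (s : ℕ → E) (n : ℕ) (x : E) :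
    localTime s (n + 1) x = localTime s n x + if s (n + 1) = x then 1 else 0 := by
  have hn : n + 1 ∉ Icc 1 n := by simp
  rw [localTime, localTime, ← insert_Icc_right_eq_Icc_add_one (by omega), filter_insert]
  split_ifs <;> simp [hn]

lemma localTime_add (s : ℕ → E) (m n : ℕ) (x : E) :
    localTime s (m + n) x = localTime s m x + localTime (fun i => s (m + i)) n x := by
  induction n with
  | zero => simp [localTime_zero]
  | succ n ih => rw [← add_assoc, localTime_succ, ih, localTime_succ, add_assoc, add_assoc]

lemma localTime_sub_const [AddGroup E] (s : ℕ → E) (c : E) (n : ℕ) (x : E) :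
    localTime (fun i => s i - c) n (x - c) = localTime s n x := by
  simp only [localTime, sub_left_inj]

lemma mem_image_of_localTime_ne_zero {s : ℕ → E} {n : ℕ} {x : E} (h : localTime s n x ≠ 0) :
    x ∈ (Icc 1 n).image s := by
  obtain ⟨i, hi⟩ := card_ne_zero.mp h
  rw [mem_filter] at hi
  exact mem_image.mpr ⟨i, hi⟩

lemma localTime_congr {s s' : ℕ → E} {n : ℕ} (h : ∀ i ∈ Icc 1 n, s i = s' i) (x : E) :
    localTime s n x = localTime s' n x := by
  unfold localTime
  congr 1
  exact filter_congr fun i hi => by rw [h i hi]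

end LocalTime

lemma finprod_comp_eq_prod_of_eq_zero {α M : Type*} [CommMonoid M] {g : ℕ → M} (hg0 : g 0 = 1)
    {f : α → ℕ} {A : Finset α} (hf : ∀ x ∉ A, f x = 0) : ∏ᶠ x, g (f x) = ∏ x ∈ A, g (f x) :=
  finprod_eq_prod_of_mulSupport_subset _ fun x hx =>
    by_contra fun h => hx (show g (f x) = 1 by rw [hf x h, hg0])

section Weight

variable {E : Type*} [DecidableEq E] (g : ℕ → ℝ)

noncomputable def localTimeWeight (s : ℕ → E) (n : ℕ) : ℝ := ∏ᶠ x, g (localTime s n x)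

variable {g}

lemma localTimeWeight_eq_prod (hg0 : g 0 = 1) (s : ℕ → E) (n : ℕ) :
    localTimeWeight g s n = ∏ x ∈ (Icc 1 n).image s, g (localTime s n x) :=
  finprod_comp_eq_prod_of_eq_zero hg0 fun _ hx => not_not.mp (mt mem_image_of_localTime_ne_zero hx)

lemma localTimeWeight_pos (hg : ∀ k, 0 < g k) (hg0 : g 0 = 1) (s : ℕ → E) (n : ℕ) :
    0 < localTimeWeight g s n := by
  rw [localTimeWeight_eq_prod hg0]
  exact prod_pos fun _ _ => hg _

lemma localTimeWeight_sub_const [AddGroup E] (s : ℕ → E) (c : E) (n : ℕ) :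
    localTimeWeight g (fun i => s i - c) n = localTimeWeight g s n := by
  rw [localTimeWeight, ← finprod_comp_equiv (Equiv.subRight c)]
  exact finprod_congr fun x => congrArg g (localTime_sub_const s c n x)

lemma localTimeWeight_congr {s s' : ℕ → E} {n : ℕ} (h : ∀ i ∈ Icc 1 n, s i = s' i) :
    localTimeWeight g s n = localTimeWeight g s' n :=
  finprod_congr fun x => congrArg g (localTime_congr h x)

lemma localTimeWeight_mul_le (hg : ∀ k, 0 ≤ g k) (hg0 : g 0 = 1)
    (hsuper : ∀ m n, g m * g n ≤ g (m + n)) (s : ℕ → E) (m n : ℕ) :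
    localTimeWeight g s m * localTimeWeight g (fun i => s (m + i)) n
      ≤ localTimeWeight g s (m + n) := by
  set A := (Icc 1 (m + n)).image s
  have hsupp : ∀ x ∉ A, localTime s m x = 0 ∧ localTime (fun i => s (m + i)) n x = 0 := by
    intro x hx
    have := mt mem_image_of_localTime_ne_zero hx
    rw [not_not, localTime_add] at this
    omega
  rw [localTimeWeight, localTimeWeight, localTimeWeight,
    finprod_comp_eq_prod_of_eq_zero hg0 fun x hx => (hsupp x hx).1,
    finprod_comp_eq_prod_of_eq_zero hg0 fun x hx => (hsupp x hx).2,
    finprod_comp_eq_prod_of_eq_zero hg0 fun x hx => ?_, ← prod_mul_distrib]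
  · refine prod_le_prod (fun x _ => mul_nonneg (hg _) (hg _)) fun x _ => ?_
    rw [localTime_add]
    exact hsuper _ _
  · rw [localTime_add, (hsupp x hx).1, (hsupp x hx).2]

lemma localTimeWeight_comp_fin_ofNat (s : ℕ → E) (n : ℕ) :
    localTimeWeight g (fun i => s (Fin.ofNat (n + 1) i)) n = localTimeWeight g s n :=
  localTimeWeight_congr fun i hi => by
    simp [Nat.mod_eq_of_lt (Nat.lt_succ_of_le (mem_Icc.mp hi).2)]

/-- The weight of `n` steps only sees `s 1, …, s n`, so it factors through the countable space
`Fin (n + 1) → E`, on which every function is measurable. -/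
lemma measurable_localTimeWeight [MeasurableSpace E] [MeasurableSingletonClass E] [Countable E]
    (n : ℕ) : Measurable fun s : ℕ → E => localTimeWeight g s n := by
  have h := (measurable_of_countable fun t : Fin (n + 1) → E =>
    localTimeWeight g (fun i => t (Fin.ofNat (n + 1) i)) n).comp
      (measurable_pi_lambda (fun (s : ℕ → E) (j : Fin (n + 1)) => s j) fun j => measurable_pi_apply _)
  simpa only [Function.comp_def, localTimeWeight_comp_fin_ofNat] using h

end Weight

theorem integral_localTimeWeight_mul_le {Ω E : Type*} [MeasurableSpace Ω] {P : Measure Ω}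
    [AddGroup E] [DecidableEq E] [MeasurableSpace E] [MeasurableSingletonClass E] [Countable E]
    {X : ℕ → Ω → E} (hX : ∀ i, Measurable (X i)) {m : ℕ}
    (hshift : Measure.map (fun ω i => X (m + i) ω - X m ω) P = Measure.map (fun ω i => X i ω) P)
    (hindep : IndepFun (fun ω (i : Fin (m + 1)) => X i ω) (fun ω i => X (m + i) ω - X m ω) P)
    {g : ℕ → ℝ} (hg : ∀ k, 0 ≤ g k) (hg0 : g 0 = 1) (hsuper : ∀ m n, g m * g n ≤ g (m + n))
    (hint : ∀ n, Integrable (fun ω => localTimeWeight g (fun i => X i ω) n) P) (n : ℕ) :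
    (∫ ω, localTimeWeight g (fun i => X i ω) m ∂P) * ∫ ω, localTimeWeight g (fun i => X i ω) n ∂P
      ≤ ∫ ω, localTimeWeight g (fun i => X i ω) (m + n) ∂P := by
  have hincr : Measurable fun ω i => X (m + i) ω - X m ω :=
    measurable_pi_lambda _ fun i =>
      (measurable_of_countable fun p : E × E => p.1 - p.2).comp ((hX _).prodMk (hX m))
  have hident : IdentDistrib (fun ω i => X (m + i) ω - X m ω) (fun ω i => X i ω) P P :=
    ⟨hincr.aemeasurable, (measurable_pi_lambda _ hX).aemeasurable, hshift⟩
  have hident_n := hident.comp (measurable_localTimeWeight (g := g) n)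
  have hindep_weight : IndepFun (fun ω => localTimeWeight g (fun i => X i ω) m)
      (fun ω => localTimeWeight g (fun i => X (m + i) ω - X m ω) n) P := by
    convert hindep.comp (measurable_of_countable fun t : Fin (m + 1) → E =>
      localTimeWeight g (fun i => t (Fin.ofNat (m + 1) i)) m)
        (measurable_localTimeWeight (g := g) n) using 2 with ω
    · exact (localTimeWeight_comp_fin_ofNat (fun i => X i ω) m).symm
    · rfl
  simp only [Function.comp_def] at hident_n
  have hint_incr := hident_n.integrable_iff.mpr (hint n)
  calc _ = (∫ ω, localTimeWeight g (fun i => X i ω) m ∂P)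
        * ∫ ω, localTimeWeight g (fun i => X (m + i) ω - X m ω) n ∂P := by
        rw [hident_n.integral_eq]
    _ = ∫ ω, localTimeWeight g (fun i => X i ω) m
        * localTimeWeight g (fun i => X (m + i) ω - X m ω) n ∂P :=
        (hindep_weight.integral_mul_eq_mul_integral (hint m).1 hint_incr.1).symm
    _ ≤ _ := by
      refine integral_mono (hindep_weight.integrable_mul (hint m) hint_incr) (hint (m + n))
        fun ω => ?_
      -- the weight is translation invariant, so the increments may be replaced by the shifted path
      rw [localTimeWeight_sub_const]
      exact localTimeWeight_mul_le hg hg0 hsuper _ m n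

theorem supermultiplicative_annealed_partition_function
    {α : Type*} [MeasurableSpace α] (P : Measure α) [IsProbabilityMeasure P]
    (d : ℕ) (S : ℕ → α → (Fin d → ℤ))
    (hmeas : ∀ i, Measurable (S i))
    (hshift : ∀ m : ℕ,
      Measure.map (fun a => fun i : ℕ => S (m + i) a - S m a) P
        = Measure.map (fun a => fun i : ℕ => S i a) P)
    (hindep : ∀ m : ℕ,
      IndepFun (fun a => fun i : Fin (m + 1) => S i a)
        (fun a => fun i : ℕ => S (m + i) a - S m a) P)
    (g : ℕ → ℝ) (hgpos : ∀ n, 0 < g n) (hg0 : g 0 = 1)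
    (hsuper : ∀ m n : ℕ, g (m + n) ≥ g m * g n)
    -- local times
    (ℓ : ℕ → (Fin d → ℤ) → α → ℕ)
    (hℓ : ∀ n x a, ℓ n x a = ((Finset.Icc 1 n).filter fun i => S i a = x).card)
    (Z : ℕ → ℝ)
    (hZ : ∀ n, Z n = ∫ a, ∏ᶠ x : Fin d → ℤ, g (ℓ n x a) ∂P)
    (hint : ∀ n, Integrable (fun a => ∏ᶠ x : Fin d → ℤ, g (ℓ n x a)) P) :
    (∀ m n : ℕ, 1 ≤ m → 1 ≤ n → Z (m + n) ≥ Z m * Z n) ∧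
    Tendsto (fun n : ℕ => ((1 / (n : ℝ) * Real.log (Z n) : ℝ) : EReal)) atTop
      (nhds (⨆ n : ℕ, ((1 / ((n : ℝ) + 1) * Real.log (Z (n + 1)) : ℝ) : EReal))) := by
  have hweight : ∀ n, (fun a => ∏ᶠ x, g (ℓ n x a)) = fun a => localTimeWeight g (S · a) n :=
    fun n => funext fun a => finprod_congr fun x => congrArg g (hℓ n x a)
  have hZ' : ∀ n, Z n = ∫ a, localTimeWeight g (S · a) n ∂P := fun n => by rw [hZ, hweight]
  have hint' : ∀ n, Integrable (fun a => localTimeWeight g (S · a) n) P := fun n =>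
    hweight n ▸ hint n
  have hsupermul : ∀ m n, Z m * Z n ≤ Z (m + n) := fun m n => by
    simpa only [hZ'] using integral_localTimeWeight_mul_le hmeas (hshift m) (hindep m)
      (fun k => (hgpos k).le) hg0 hsuper hint' n
  have hZpos : ∀ n, 0 < Z n := fun n => by
    rw [hZ', integral_pos_iff_support_of_nonneg
      (fun a => (localTimeWeight_pos hgpos hg0 _ n).le) (hint' n),
      Function.support_eq_univ fun a => (localTimeWeight_pos hgpos hg0 _ n).ne', measure_univ]
    exact one_pos
  refine ⟨fun m n _ _ => hsupermul m n, ?_⟩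
  simpa only [one_div_mul_eq_div] using tendsto_div_iSup_of_superadditive fun m n => by
    rw [← Real.log_mul (hZpos m).ne' (hZpos n).ne']
    exact Real.log_le_log (mul_pos (hZpos m) (hZpos n)) (hsupermul m n)
end
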